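/- Let S = {±e_1, ±e_2, ±e_3} be the set of the six standard unit vectors and their negatives in E^3, and let K_0 = ⋃_{x ∈ S} conv({(√2)·x} ∪ B^3) be the cap body whose six base caps are the open caps of radius π/4 centered at the points of S. Then the illumination number of K_0 equals 6. -/

import Mathlib

/-!
Every vertex `√2 • e` of `K₀` (`e = ±eᵢ`) is a boundary point: for each signed basis vector `f ⊥ e`,
the body lies in the half-space `⟪e - f, ·⟫ ≤ √2`, whose boundary passes through the vertex. So a
direction `w` illuminating `√2 • e` satisfies `⟪e - f, w⟫ < 0` for all such `f`; for two different
vertices `e, e'` one can choose `f, f'` with `(e - f) + (e' - f') = 0`, so no direction illuminates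
two vertices and at least six are needed.

Conversely the six directions `±eᵢ` suffice. A boundary point `p` lying in the cap with vertex `v`
satisfies `‖p - s • v‖ = 1 - s` for some `s ∈ [0, 1]`. If `s = 1`, `p = v` is illuminated by `-e`;
otherwise `d = p - s • v` has a coordinate `dᵢ ≠ 0`, and moving `p` by `|dᵢ|` in the direction
`-sign(dᵢ) eᵢ` kills that coordinate, so `p` enters the open ball `ball (s • v) (1 - s)`, which
lies inside `K₀`.
-/

open Metric Real Set

noncomputable section

/-- The illumination number of a convex body `K`: the least number of unit vectors
(directions) such that every boundary point `p` of `K` admits a direction `v` in the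
set with `p + t • v` in the interior of `K` for some `t > 0`. -/
def illumNum (K : Set (EuclideanSpace ℝ (Fin 3))) : ℕ :=
  sInf {n : ℕ | ∃ V : Finset (EuclideanSpace ℝ (Fin 3)), V.card = n ∧
    (∀ v ∈ V, ‖v‖ = 1) ∧
    ∀ p ∈ frontier K, ∃ v ∈ V, ∃ t : ℝ, 0 < t ∧ p + t • v ∈ interior K}

/-- The six standard unit vectors and their negatives in `E³`. -/
def stdSix : Set (EuclideanSpace ℝ (Fin 3)) :=
  {EuclideanSpace.single 0 1, -EuclideanSpace.single 0 1,
   EuclideanSpace.single 1 1, -EuclideanSpace.single 1 1,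
   EuclideanSpace.single 2 1, -EuclideanSpace.single 2 1}

/-- The cap body `K₀` whose six base caps are the open caps of radius `π/4` centered
at the points `±e₁, ±e₂, ±e₃`; its vertices are the points `√2 • x`, `x ∈ S`. -/
def K₀ : Set (EuclideanSpace ℝ (Fin 3)) :=
  ⋃ x ∈ stdSix, convexHull ℝ ({Real.sqrt 2 • x} ∪ closedBall 0 1)

open scoped RealInnerProductSpace Topology

local notation "ℝ³" => EuclideanSpace ℝ (Fin 3)

section Spike

variable {E : Type*} [NormedAddCommGroup E] [NormedSpace ℝ E]

def spike (v : E) : Set E := convexHull ℝ ({v} ∪ closedBall 0 1)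

def Illuminates (K : Set E) (v p : E) : Prop := ∃ t : ℝ, 0 < t ∧ p + t • v ∈ interior K

theorem spike_eq_image (v : E) :
    spike v = (fun q : ℝ × E => q.1 • v + (1 - q.1) • q.2) '' (Icc 0 1 ×ˢ closedBall 0 1) := by
  rw [spike, singleton_union, convexHull_insert ⟨0, mem_closedBall_self zero_le_one⟩,
    (convex_closedBall 0 1).convexHull_eq, convexJoin_singleton_left]
  ext p
  simp only [mem_iUnion, segment, mem_ofPred_eq, mem_image, mem_prod, mem_Icc, Prod.exists]
  constructor
  · rintro ⟨y, hy, a, b, ha, hb, hab, rfl⟩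
    exact ⟨a, y, ⟨⟨ha, by linarith⟩, hy⟩, by rw [← hab, add_sub_cancel_left]⟩
  · rintro ⟨s, y, ⟨⟨hs0, hs1⟩, hy⟩, rfl⟩
    exact ⟨y, hy, s, 1 - s, hs0, by linarith, by ring, rfl⟩

theorem isCompact_spike [ProperSpace E] (v : E) : IsCompact (spike v) := by
  rw [spike_eq_image]
  exact (isCompact_Icc.prod (isCompact_closedBall 0 1)).image (by fun_prop)

theorem exists_norm_sub_smul_le_of_mem_spike {v p : E} (hp : p ∈ spike v) :
    ∃ s ∈ Icc (0 : ℝ) 1, ‖p - s • v‖ ≤ 1 - s := by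
  rw [spike_eq_image] at hp
  obtain ⟨⟨s, y⟩, ⟨hs, hy⟩, rfl⟩ := hp
  refine ⟨s, hs, ?_⟩
  rw [add_sub_cancel_left, norm_smul, Real.norm_of_nonneg (sub_nonneg.2 hs.2)]
  exact mul_le_of_le_one_right (sub_nonneg.2 hs.2) (mem_closedBall_zero_iff.1 hy)

theorem ball_subset_spike (v : E) {s : ℝ} (hs : 0 ≤ s) : ball (s • v) (1 - s) ⊆ spike v := by
  intro q hq
  rw [mem_ball, dist_eq_norm] at hq
  have hs1 : 0 < 1 - s := (norm_nonneg _).trans_lt hq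
  rw [spike_eq_image]
  refine ⟨(s, (1 - s)⁻¹ • (q - s • v)), ⟨⟨hs, by linarith⟩, ?_⟩, ?_⟩
  · rw [mem_closedBall_zero_iff, norm_smul, Real.norm_of_nonneg (inv_nonneg.2 hs1.le),
      inv_mul_le_iff₀ hs1, mul_one]
    exact hq.le
  · simp only [smul_smul, mul_inv_cancel₀ hs1.ne', one_smul, add_sub_cancel]

end Spike

section HalfSpace

variable {E : Type*} [NormedAddCommGroup E] [InnerProductSpace ℝ E]

theorem spike_subset_halfSpace {v u : E} {c : ℝ} (hu : ‖u‖ ≤ c) (hv : ⟪u, v⟫ ≤ c) :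
    spike v ⊆ {p | ⟪u, p⟫ ≤ c} := by
  refine convexHull_min ?_ (convex_halfSpace_le (innerₛₗ ℝ u).isLinear c)
  rintro p (rfl | hp)
  · exact hv
  · calc ⟪u, p⟫ ≤ ‖u‖ * ‖p‖ := real_inner_le_norm u p
      _ ≤ c := (mul_le_of_le_one_right (norm_nonneg u) (mem_closedBall_zero_iff.1 hp)).trans hu

theorem inner_lt_of_mem_interior {u q : E} {c : ℝ} {S : Set E} (hu : u ≠ 0)
    (hS : S ⊆ {p | ⟪u, p⟫ ≤ c}) (hq : q ∈ interior S) : ⟪u, q⟫ < c := by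
  have hpath : ∀ᶠ ε in 𝓝[>] (0 : ℝ), q + ε • u ∈ S := by
    refine nhdsWithin_le_nhds (Continuous.tendsto' (by fun_prop) 0 q (by simp) ?_)
    exact mem_interior_iff_mem_nhds.1 hq
  obtain ⟨ε, hε, hε0⟩ := (hpath.and self_mem_nhdsWithin).exists
  have := hS hε
  simp only [mem_ofPred_eq, inner_add_right, inner_smul_right, real_inner_self_eq_norm_sq] at this
  nlinarith [mul_pos hε0 (pow_pos (norm_pos_iff.2 hu) 2)]

end HalfSpace

section SignedBasis

variable {ι : Type*} [DecidableEq ι]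

def signedBasis (a : ι × ℤˣ) : EuclideanSpace ℝ ι := EuclideanSpace.single a.1 ((a.2 : ℤ) : ℝ)

theorem signedBasis_injective : Function.Injective (signedBasis (ι := ι)) := by
  rintro ⟨i, σ⟩ ⟨j, τ⟩ h
  have hi := congrArg (· i) h
  by_cases hij : i = j
  · subst hij
    simp only [signedBasis, PiLp.single_apply, if_true, Int.cast_inj, Units.val_inj] at hi
    rw [hi]
  · simp [signedBasis, hij] at hi

theorem signedBasis_neg (i : ι) (σ : ℤˣ) : signedBasis (i, -σ) = -signedBasis (i, σ) := by
  simp [signedBasis, ← PiLp.single_neg]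

variable [Fintype ι]

theorem inner_signedBasis_right (u : EuclideanSpace ℝ ι) (a : ι × ℤˣ) :
    ⟪u, signedBasis a⟫ = u a.1 * ((a.2 : ℤ) : ℝ) := by
  simp [signedBasis, EuclideanSpace.inner_single_right, mul_comm]

theorem norm_signedBasis (a : ι × ℤˣ) : ‖signedBasis a‖ = 1 := by
  rcases Int.units_eq_one_or a.2 with h | h <;> simp [signedBasis, h]

theorem inner_signedBasis_self (a : ι × ℤˣ) : ⟪signedBasis a, signedBasis a⟫ = 1 := by
  rw [real_inner_self_eq_norm_sq, norm_signedBasis, one_pow]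

theorem inner_signedBasis_of_ne {a b : ι × ℤˣ} (hab : a.1 ≠ b.1) :
    ⟪signedBasis a, signedBasis b⟫ = 0 := by
  rw [inner_signedBasis_right, signedBasis, PiLp.single_apply, if_neg (Ne.symm hab), zero_mul]

theorem inner_signedBasis_sub_self_of_ne {a b : ι × ℤˣ} (hab : a.1 ≠ b.1) :
    ⟪signedBasis a - signedBasis b, signedBasis a⟫ = 1 := by
  rw [inner_sub_left, inner_signedBasis_self, real_inner_comm, inner_signedBasis_of_ne hab,
    sub_zero]

theorem norm_signedBasis_sub_of_ne {a b : ι × ℤˣ} (hab : a.1 ≠ b.1) :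
    ‖signedBasis a - signedBasis b‖ = √2 := by
  rw [← Real.sqrt_sq (norm_nonneg _), norm_sub_sq_real, norm_signedBasis, norm_signedBasis,
    inner_signedBasis_of_ne hab]
  norm_num

theorem inner_signedBasis_sub_le_one {a b : ι × ℤˣ} (hab : a.1 ≠ b.1) (c : ι × ℤˣ) :
    ⟪signedBasis a - signedBasis b, signedBasis c⟫ ≤ 1 := by
  rw [inner_signedBasis_right]
  rcases Int.units_eq_one_or a.2 with ha | ha <;> rcases Int.units_eq_one_or b.2 with hb | hb <;>
    rcases Int.units_eq_one_or c.2 with hc | hc <;>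
    by_cases hca : c.1 = a.1 <;> by_cases hcb : c.1 = b.1 <;>
    simp_all [signedBasis]

theorem exists_norm_add_smul_signedBasis_lt {d : EuclideanSpace ℝ ι} (hd : d ≠ 0) :
    ∃ a, ∃ t : ℝ, 0 < t ∧ ‖d + t • signedBasis a‖ < ‖d‖ := by
  obtain ⟨i, hi⟩ : ∃ i, d i ≠ (0 : ℝ) := by
    by_contra! h
    exact hd (by ext i; simpa using h i)
  set σ : ℤˣ := if 0 < d i then -1 else 1
  have hσ : d i * ((σ : ℤ) : ℝ) = -|d i| := by
    rcases hi.lt_or_gt with hneg | hpos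
    · simp [σ, hneg.not_gt, abs_of_neg hneg]
    · simp [σ, hpos, abs_of_pos hpos]
  refine ⟨(i, σ), |d i|, abs_pos.2 hi, ?_⟩
  have hsq : ‖d + |d i| • signedBasis (i, σ)‖ ^ 2 = ‖d‖ ^ 2 - |d i| ^ 2 := by
    rw [norm_add_sq_real, inner_smul_right, inner_signedBasis_right, hσ, norm_smul,
      norm_signedBasis, Real.norm_eq_abs, abs_abs]
    ring
  refine lt_of_pow_lt_pow_left₀ 2 (norm_nonneg d) ?_
  rw [hsq]
  linarith [pow_pos (abs_pos.2 hi) 2]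

end SignedBasis

theorem stdSix_eq_range : stdSix = range signedBasis := by
  ext x
  simp only [stdSix, mem_insert_iff, mem_singleton_iff, mem_range, Prod.exists]
  constructor
  · rintro (rfl | rfl | rfl | rfl | rfl | rfl)
    exacts [⟨0, 1, by simp [signedBasis]⟩, ⟨0, -1, by simp [signedBasis, PiLp.single_neg]⟩,
      ⟨1, 1, by simp [signedBasis]⟩, ⟨1, -1, by simp [signedBasis, PiLp.single_neg]⟩,
      ⟨2, 1, by simp [signedBasis]⟩, ⟨2, -1, by simp [signedBasis, PiLp.single_neg]⟩]
  · rintro ⟨i, σ, rfl⟩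
    rcases Int.units_eq_one_or σ with rfl | rfl <;> fin_cases i <;>
      simp [signedBasis, PiLp.single_neg]

theorem K₀_eq_iUnion : K₀ = ⋃ a, spike (√2 • signedBasis a) := by
  rw [K₀, stdSix_eq_range, biUnion_range]
  rfl

theorem isClosed_K₀ : IsClosed K₀ := by
  rw [K₀_eq_iUnion]
  exact isClosed_iUnion_of_finite fun a => (isCompact_spike _).isClosed

theorem K₀_subset_halfSpace {a b : Fin 3 × ℤˣ} (hab : a.1 ≠ b.1) :
    K₀ ⊆ {p | ⟪signedBasis a - signedBasis b, p⟫ ≤ √2} := by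
  rw [K₀_eq_iUnion]
  refine iUnion_subset fun c => spike_subset_halfSpace (norm_signedBasis_sub_of_ne hab).le ?_
  rw [inner_smul_right]
  exact mul_le_of_le_one_right (Real.sqrt_nonneg 2) (inner_signedBasis_sub_le_one hab c)

theorem inner_lt_of_mem_interior_K₀ {a b : Fin 3 × ℤˣ} (hab : a.1 ≠ b.1) {q : ℝ³}
    (hq : q ∈ interior K₀) : ⟪signedBasis a - signedBasis b, q⟫ < √2 :=
  inner_lt_of_mem_interior (sub_ne_zero.2 (signedBasis_injective.ne (mt (congrArg Prod.fst) hab)))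
    (K₀_subset_halfSpace hab) hq

theorem vertex_mem_frontier_K₀ (a : Fin 3 × ℤˣ) : √2 • signedBasis a ∈ frontier K₀ := by
  refine ⟨subset_closure ?_, fun hint => ?_⟩
  · rw [K₀_eq_iUnion]
    exact mem_iUnion_of_mem a (subset_convexHull ℝ _ (mem_union_left _ rfl))
  · obtain ⟨k, hk⟩ := exists_ne a.1
    have := inner_lt_of_mem_interior_K₀ (b := (k, 1)) hk.symm hint
    rw [inner_smul_right, inner_signedBasis_sub_self_of_ne hk.symm, mul_one] at this
    exact this.false

theorem inner_neg_of_illuminates_vertex {a b : Fin 3 × ℤˣ} (hab : a.1 ≠ b.1)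
    {w : ℝ³} (hw : Illuminates K₀ w (√2 • signedBasis a)) :
    ⟪signedBasis a - signedBasis b, w⟫ < 0 := by
  obtain ⟨t, ht, hint⟩ := hw
  have := inner_lt_of_mem_interior_K₀ hab hint
  rw [inner_add_right, inner_smul_right, inner_smul_right, inner_signedBasis_sub_self_of_ne hab,
    mul_one, add_lt_iff_neg_left] at this
  exact neg_of_mul_neg_right this ht.le

theorem eq_of_illuminates_vertex {a a' : Fin 3 × ℤˣ} {w : ℝ³}
    (ha : Illuminates K₀ w (√2 • signedBasis a)) (ha' : Illuminates K₀ w (√2 • signedBasis a')) :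
    a = a' := by
  by_contra hne
  obtain ⟨b, b', hab, hab', hsum⟩ : ∃ b b' : Fin 3 × ℤˣ, a.1 ≠ b.1 ∧ a'.1 ≠ b'.1 ∧
      signedBasis a - signedBasis b + (signedBasis a' - signedBasis b') = 0 := by
    by_cases hi : a.1 = a'.1
    · obtain ⟨k, hk⟩ := exists_ne a.1
      have hσ : a'.2 = -a.2 := Int.units_ne_iff_eq_neg.1 fun h => hne (Prod.ext hi h.symm)
      refine ⟨(k, 1), (k, -1), hk.symm, hi ▸ hk.symm, ?_⟩
      rw [← Prod.mk.eta (p := a'), ← hi, hσ, signedBasis_neg, signedBasis_neg]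
      abel
    · exact ⟨a', a, hi, Ne.symm hi, by abel⟩
  have h := add_neg (inner_neg_of_illuminates_vertex hab ha)
    (inner_neg_of_illuminates_vertex hab' ha')
  rw [← inner_add_left, hsum, inner_zero_left] at h
  exact h.false

theorem ball_subset_interior_K₀ (a : Fin 3 × ℤˣ) {s : ℝ} (hs : 0 ≤ s) :
    ball (s • √2 • signedBasis a) (1 - s) ⊆ interior K₀ := by
  refine interior_maximal ?_ isOpen_ball
  rw [K₀_eq_iUnion]
  exact (ball_subset_spike _ hs).trans (subset_iUnion (fun c => spike (√2 • signedBasis c)) a)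

theorem exists_illuminates_of_mem_frontier_K₀ {p : ℝ³}
    (hp : p ∈ frontier K₀) : ∃ a, Illuminates K₀ (signedBasis a) p := by
  obtain ⟨c, hc⟩ := mem_iUnion.1 (K₀_eq_iUnion ▸ isClosed_K₀.frontier_subset hp)
  obtain ⟨s, ⟨hs0, hs1⟩, hps⟩ := exists_norm_sub_smul_le_of_mem_spike hc
  have hnot : ¬ ‖p - s • √2 • signedBasis c‖ < 1 - s := fun h =>
    hp.2 (ball_subset_interior_K₀ c hs0 (by rwa [mem_ball, dist_eq_norm]))
  by_cases hd : p - s • √2 • signedBasis c = 0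
  · have hs : s = 1 := by
      rw [hd, norm_zero] at hnot
      linarith
    have hpv : p = √2 • signedBasis c := by
      rwa [hs, one_smul, sub_eq_zero] at hd
    refine ⟨(c.1, -c.2), √2 / 2, by positivity, ?_⟩
    apply ball_subset_interior_K₀ c (s := 1 / 2) (by norm_num)
    rw [mem_ball, dist_eq_norm, hpv, signedBasis_neg, Prod.mk.eta]
    have hmid : √2 • signedBasis c + (√2 / 2) • -signedBasis c
        - (1 / 2 : ℝ) • √2 • signedBasis c = 0 := by
      module
    rw [hmid, norm_zero]
    norm_num
  · obtain ⟨a, t, ht, hlt⟩ := exists_norm_add_smul_signedBasis_lt hd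
    refine ⟨a, t, ht, ball_subset_interior_K₀ c hs0 ?_⟩
    rw [mem_ball, dist_eq_norm, add_sub_right_comm]
    exact hlt.trans_le hps

theorem six_le_card_of_illuminates_frontier_K₀ {V : Finset ℝ³}
    (hV : ∀ p ∈ frontier K₀, ∃ v ∈ V, Illuminates K₀ v p) : 6 ≤ V.card := by
  choose f hfV hf using fun a => hV _ (vertex_mem_frontier_K₀ a)
  calc 6 = (Finset.univ : Finset (Fin 3 × ℤˣ)).card := rfl
    _ ≤ V.card := Finset.card_le_card_of_injOn f (fun a _ => hfV a)
      fun a _ a' _ h => eq_of_illuminates_vertex (hf a) (h ▸ hf a')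

/-- The illumination number of the cap body `K₀` equals 6. -/
theorem illumNum_K₀ : illumNum K₀ = 6 := by
  have h6 : 6 ∈ {n : ℕ | ∃ V : Finset ℝ³, V.card = n ∧
      (∀ v ∈ V, ‖v‖ = 1) ∧ ∀ p ∈ frontier K₀, ∃ v ∈ V, Illuminates K₀ v p} := by
    refine ⟨Finset.univ.map ⟨signedBasis, signedBasis_injective⟩, rfl, ?_, fun p hp => ?_⟩
    · intro v hv
      obtain ⟨a, -, rfl⟩ := Finset.mem_map.1 hv
      exact norm_signedBasis a
    · obtain ⟨a, ha⟩ := exists_illuminates_of_mem_frontier_K₀ hp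
      exact ⟨_, Finset.mem_map_of_mem _ (Finset.mem_univ a), ha⟩
  obtain ⟨V, hV, -, hillum⟩ := Nat.sInf_mem ⟨6, h6⟩
  exact le_antisymm (Nat.sInf_le h6) ((six_le_card_of_illuminates_frontier_K₀ hillum).trans_eq hV)

end
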